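/- Let ε_1, ε_2 ≥ 0 be real numbers and let η_1, η_2 be real numbers with 0 < η_1 ≤ 1 and 0 < η_2 ≤ 1. Then (e^{ε_1} + η_1 − 1)·(e^{ε_2} + η_2 − 1) ≤ e^{ε_1+ε_2} + η_1·η_2 − 1. -/

import Mathlib

open Matrix BigOperators
open scoped ComplexOrder

namespace QDP

variable {n : Type*} [Fintype n] [DecidableEq n]

/-- The square root of a positive semidefinite matrix (Mathlib's removed `Matrix.PosSemidef.sqrt`,
restated with its former definition). -/
noncomputable def _root_.Matrix.PosSemidef.sqrt {m : Type*} [Fintype m] [DecidableEq m]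
    {𝕜 : Type*} [RCLike 𝕜] {A : Matrix m m 𝕜} (hA : A.PosSemidef) : Matrix m m 𝕜 :=
  hA.1.eigenvectorUnitary.1 * diagonal ((↑) ∘ Real.sqrt ∘ hA.1.eigenvalues) *
    (star hA.1.eigenvectorUnitary : Matrix m m 𝕜)

/-- Trace distance `D(ρ,σ) = (1/2) tr |ρ - σ|`, where `|A| = sqrt (Aᴴ A)`. -/
noncomputable def traceDist (ρ σ : Matrix n n ℂ) : ℝ :=
  (1 / 2 : ℝ) * ((Matrix.posSemidef_conjTranspose_mul_self (ρ - σ)).sqrt.trace).re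

/-- A density matrix: positive semidefinite with trace one. -/
def IsDensity (ρ : Matrix n n ℂ) : Prop := ρ.PosSemidef ∧ ρ.trace = 1

/-- The largest eigenvalue of a (Hermitian) matrix. -/
noncomputable def lamMax (M : Matrix n n ℂ) : ℝ :=
  if h : M.IsHermitian then ⨆ i, h.eigenvalues i else 0

/-- The smallest eigenvalue of a (Hermitian) matrix. -/
noncomputable def lamMin (M : Matrix n n ℂ) : ℝ :=
  if h : M.IsHermitian then ⨅ i, h.eigenvalues i else 0

/-- Application of a quantum channel given by Kraus matrices. -/
noncomputable def applyChan {ι : Type*} [Fintype ι] (E : ι → Matrix n n ℂ)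
    (ρ : Matrix n n ℂ) : Matrix n n ℂ := ∑ j, E j * ρ * (E j)ᴴ

/-- The dual of a quantum channel given by Kraus matrices. -/
noncomputable def dualChan {ι : Type*} [Fintype ι] (E : ι → Matrix n n ℂ)
    (M : Matrix n n ℂ) : Matrix n n ℂ := ∑ j, (E j)ᴴ * M * E j

/-- `(ε,δ)`-differential privacy within `η` of the quantum algorithm `(E, M)`. -/
def IsDP {ι : Type*} [Fintype ι] {O : Type*} [Fintype O]
    (E : ι → Matrix n n ℂ) (M : O → Matrix n n ℂ) (ε δ η : ℝ) : Prop :=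
  ∀ ρ σ : Matrix n n ℂ, IsDensity ρ → IsDensity σ → traceDist ρ σ ≤ η →
    ∀ S : Finset O,
      (∑ k ∈ S, (M k * applyChan E ρ).trace).re ≤
        Real.exp ε * (∑ k ∈ S, (M k * applyChan E σ).trace).re + δ

/-- Rank-one projection `|ψ⟩⟨ψ|`. -/
noncomputable def proj (ψ : n → ℂ) : Matrix n n ℂ := vecMulVec ψ (star ψ)

end QDP

theorem add_sub_one_mul_add_sub_one_le {R : Type*} [CommRing R] [PartialOrder R]
    [IsOrderedRing R] {x y s t : R} (hx : 1 ≤ x) (hy : 1 ≤ y) (hs : s ≤ 1) (ht : t ≤ 1) :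
    (x + s - 1) * (y + t - 1) ≤ x * y + s * t - 1 := by
  have gap : x * y + s * t - 1 - (x + s - 1) * (y + t - 1) =
      (x - 1) * (1 - t) + (y - 1) * (1 - s) := by
    ring
  rw [← sub_nonneg, gap]
  exact add_nonneg (mul_nonneg (sub_nonneg.2 hx) (sub_nonneg.2 ht))
    (mul_nonneg (sub_nonneg.2 hy) (sub_nonneg.2 hs))

theorem exp_eta_composition_ineq_general (ε1 ε2 η1 η2 : ℝ) (hε1 : 0 ≤ ε1) (hε2 : 0 ≤ ε2)
    (hη1' : η1 ≤ 1) (hη2' : η2 ≤ 1) :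
    (Real.exp ε1 + η1 - 1) * (Real.exp ε2 + η2 - 1) ≤
      Real.exp (ε1 + ε2) + η1 * η2 - 1 := by
  rw [Real.exp_add]
  exact add_sub_one_mul_add_sub_one_le (Real.one_le_exp hε1) (Real.one_le_exp hε2) hη1' hη2'

/-- The key inequality in the composition theorem for quantum differential privacy. -/
theorem exp_eta_composition_ineq (ε1 ε2 η1 η2 : ℝ) (hε1 : 0 ≤ ε1) (hε2 : 0 ≤ ε2)
    (hη1 : 0 < η1) (hη1' : η1 ≤ 1) (hη2 : 0 < η2) (hη2' : η2 ≤ 1) :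
    (Real.exp ε1 + η1 - 1) * (Real.exp ε2 + η2 - 1) ≤
      Real.exp (ε1 + ε2) + η1 * η2 - 1 :=
  exp_eta_composition_ineq_general ε1 ε2 η1 η2 hε1 hε2 hη1' hη2'
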